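/- Let φ be a poor man's formula and let q be a propositional variable not occurring in φ. Then φ is satisfiable with respect to F≥1 if and only if the formula φ ∧ ⋀_{i=0}^{md(φ)} □^i ◇q is satisfiable with respect to the class of all frames. -/
import Mathlib


namespace PoorMansModal

/-- Modal formulas over propositional variables of type `α`: variables `p`,
negated variables `p̄`, general negation, conjunction, disjunction, box, diamond,
and the constants `true` and `false`. -/
inductive Fml (α : Type) : Type where
  | var : α → Fml α
  | nvar : α → Fml α
  | neg : Fml α → Fml α
  | and : Fml α → Fml α → Fml α
  | or : Fml α → Fml α → Fml α
  | box : Fml α → Fml α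
  | dia : Fml α → Fml α
  | tru : Fml α
  | fls : Fml α

/-- A Kripke model: a nonempty set of worlds, an accessibility relation, and a valuation. -/
structure Kripke (α : Type) where
  World : Type
  nonempty : Nonempty World
  R : World → World → Prop
  V : α → World → Prop

/-- Truth of a formula at a world of a model. -/
def Sat {α : Type} (M : Kripke α) : Fml α → M.World → Prop
  | .var p, w => M.V p w
  | .nvar p, w => ¬ M.V p w
  | .neg φ, w => ¬ Sat M φ w
  | .and φ ψ, w => Sat M φ w ∧ Sat M ψ w
  | .or φ ψ, w => Sat M φ w ∨ Sat M ψ w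
  | .box φ, w => ∀ v, M.R w v → Sat M φ v
  | .dia φ, w => ∃ v, M.R w v ∧ Sat M φ v
  | .tru, _ => True
  | .fls, _ => False

/-- Modal depth: depth of nesting of `□` and `◇`. -/
def mdep {α : Type} : Fml α → ℕ
  | .var _ => 0
  | .nvar _ => 0
  | .neg φ => mdep φ
  | .and φ ψ => max (mdep φ) (mdep ψ)
  | .or φ ψ => max (mdep φ) (mdep ψ)
  | .box φ => mdep φ + 1
  | .dia φ => mdep φ + 1
  | .tru => 0
  | .fls => 0

/-- Conjunction of a list of formulas; the empty conjunction is the always-true formula. -/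
def bigConj {α : Type} : List (Fml α) → Fml α
  | [] => .tru
  | [φ] => φ
  | φ :: rest => .and φ (bigConj rest)

/-- `□^k φ`. -/
def boxI {α : Type} : ℕ → Fml α → Fml α
  | 0, φ => φ
  | k + 1, φ => .box (boxI k φ)

/-- `◇^k φ`. -/
def diaI {α : Type} : ℕ → Fml α → Fml α
  | 0, φ => φ
  | k + 1, φ => .dia (diaI k φ)

/-- `(◇□)^k φ`. -/
def diaBoxI {α : Type} : ℕ → Fml α → Fml α
  | 0, φ => φ
  | k + 1, φ => .dia (.box (diaBoxI k φ))

/-- The literal with variable `l.1` and sign `l.2` (`true` = positive). -/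
def litF {α : Type} (l : α × Bool) : Fml α := if l.2 then .var l.1 else .nvar l.1

/-- The variable `p` occurs in the formula. -/
def occursV {α : Type} (p : α) : Fml α → Prop
  | .var q => p = q
  | .nvar q => p = q
  | .neg φ => occursV p φ
  | .and φ ψ => occursV p φ ∨ occursV p ψ
  | .or φ ψ => occursV p φ ∨ occursV p ψ
  | .box φ => occursV p φ
  | .dia φ => occursV p φ
  | .tru => False
  | .fls => False

/-- Poor man's formulas: built from literals, `∧`, `□`, `◇` only. -/
def PoorF {α : Type} : Fml α → Prop
  | .var _ => True
  | .nvar _ => True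
  | .and φ ψ => PoorF φ ∧ PoorF ψ
  | .box φ => PoorF φ
  | .dia φ => PoorF φ
  | _ => False

/-- Formulas of the language `L`: built from literals, `∧`, `∨`, `□`, `◇`. -/
def InL {α : Type} : Fml α → Prop
  | .var _ => True
  | .nvar _ => True
  | .and φ ψ => InL φ ∧ InL ψ
  | .or φ ψ => InL φ ∧ InL ψ
  | .box φ => InL φ
  | .dia φ => InL φ
  | _ => False

/-- Every world has at most one successor. -/
def AtMostOne {W : Type} (R : W → W → Prop) : Prop :=
  ∀ w v v', R w v → R w v' → v = v'

/-- Every world has at least one successor. -/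
def AtLeastOne {W : Type} (R : W → W → Prop) : Prop :=
  ∀ w, ∃ v, R w v

/-- Every world has at most two successors. -/
def AtMostTwo {W : Type} (R : W → W → Prop) : Prop :=
  ∀ w v₁ v₂ v₃, R w v₁ → R w v₂ → R w v₃ → v₁ = v₂ ∨ v₁ = v₃ ∨ v₂ = v₃

/-- `chainR R n w v`: there is an `R`-path of length exactly `n` from `w` to `v`. -/
def chainR {W : Type} (R : W → W → Prop) : ℕ → W → W → Prop
  | 0, w, v => w = v
  | k + 1, w, v => ∃ u, R w u ∧ chainR R k u v

/-- `R` is the parent-child relation of a rooted tree with root `root`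
in which every node has at most two children. -/
structure IsBinTree {W : Type} (R : W → W → Prop) (root : W) : Prop where
  reach : ∀ w, Relation.ReflTransGen R root w
  root_no_parent : ∀ w, ¬ R w root
  unique_parent : ∀ w v v', R v w → R v' w → v = v'
  acyclic : ∀ w, ¬ Relation.TransGen R w w
  at_most_two_children : ∀ w v₁ v₂ v₃, R w v₁ → R w v₂ → R w v₃ → v₁ = v₂ ∨ v₁ = v₃ ∨ v₂ = v₃

/-- `φ_exp = ⋀_{i=1}^n □^{i-1}(◇□^{n-i} p_i ∧ ◇□^{n-i} p̄_i)`, with `p_i = var i`. -/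
def phiExp (n : ℕ) : Fml ℕ :=
  bigConj ((List.range n).map (fun j =>
    boxI j (.and (.dia (boxI (n - 1 - j) (.var (j + 1))))
                 (.dia (boxI (n - 1 - j) (.nvar (j + 1)))))))

/-- Satisfiability with respect to the class of all frames. -/
def SatAll (φ : Fml ℕ) : Prop := ∃ (M : Kripke ℕ) (w : M.World), Sat M φ w

/-- Satisfiability with respect to `F≤1`. -/
def SatLe1 (φ : Fml ℕ) : Prop := ∃ M : Kripke ℕ, AtMostOne M.R ∧ ∃ w, Sat M φ w

/-- Satisfiability with respect to `F≥1`. -/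
def SatGe1 (φ : Fml ℕ) : Prop := ∃ M : Kripke ℕ, AtLeastOne M.R ∧ ∃ w, Sat M φ w

/-- Satisfiability with respect to `F≤2`. -/
def SatLe2 (φ : Fml ℕ) : Prop := ∃ M : Kripke ℕ, AtMostTwo M.R ∧ ∃ w, Sat M φ w

/-- A one-world model with no successors, realizing the boolean assignment `v`;
truth at its world is propositional truth for formulas without modal operators. -/
def propModel (v : ℕ → Bool) : Kripke ℕ :=
  { World := Unit, nonempty := ⟨()⟩, R := fun _ _ => False, V := fun p _ => v p = true }

/-- Propositional satisfaction of `φ` under the assignment `v`. -/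
def PropSat (v : ℕ → Bool) (φ : Fml ℕ) : Prop := Sat (propModel v) φ ()


lemma sat_bigConj {α : Type} (M : Kripke α) (w : M.World) :
    ∀ l : List (Fml α), Sat M (bigConj l) w ↔ ∀ ψ ∈ l, Sat M ψ w
  | [] => by simp [bigConj, Sat]
  | [ψ] => by simp [bigConj]
  | ψ :: χ :: rest => by
    rw [show bigConj (ψ :: χ :: rest) = .and ψ (bigConj (χ :: rest)) from rfl]
    simp [Sat, sat_bigConj M w (χ :: rest)]

lemma sat_boxI {α : Type} (M : Kripke α) (ψ : Fml α) :
    ∀ (i : ℕ) (w : M.World), Sat M (boxI i ψ) w ↔ ∀ u, chainR M.R i w u → Sat M ψ u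
  | 0, w => by
    simp only [boxI, chainR]
    constructor
    · rintro h u rfl; exact h
    · intro h; exact h w rfl
  | i + 1, w => by
    simp only [boxI, Sat, chainR]
    constructor
    · rintro h u ⟨v, hv, hc⟩
      exact (sat_boxI M ψ i v).1 (h v hv) u hc
    · intro h v hv
      exact (sat_boxI M ψ i v).2 fun u hc => h u ⟨v, hv, hc⟩

lemma chainR_snoc {W : Type} (R : W → W → Prop) :
    ∀ (n : ℕ) (w u v : W), chainR R n w u → R u v → chainR R (n + 1) w v
  | 0, w, u, v, h, huv => by cases h; exact ⟨v, huv, rfl⟩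
  | n + 1, w, u, v, h, huv => by
    obtain ⟨x, hwx, hc⟩ := h
    exact ⟨x, hwx, chainR_snoc R n x u v hc huv⟩

/-- Changing the valuation of a non-occurring variable doesn't affect truth. -/
lemma sat_addq {α : Type} [DecidableEq α] (M : Kripke α) (q : α) :
    ∀ (ψ : Fml α) (w : M.World), ¬ occursV q ψ →
      (Sat M ψ w ↔
        Sat { World := M.World, nonempty := M.nonempty, R := M.R,
              V := fun p u => p = q ∨ M.V p u } ψ w)
  | .var p, w, h => by
    simp only [Sat, occursV] at *
    constructor
    · exact fun hv => Or.inr hv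
    · rintro (rfl | hv)
      · exact absurd rfl h
      · exact hv
  | .nvar p, w, h => by
    simp only [Sat, occursV] at *
    constructor
    · intro hv hor
      rcases hor with rfl | hp
      · exact h rfl
      · exact hv hp
    · intro hv hp; exact hv (Or.inr hp)
  | .neg ψ, w, h => by
    simp only [Sat, occursV] at *
    exact not_congr (sat_addq M q ψ w h)
  | .and ψ χ, w, h => by
    simp only [Sat, occursV] at *
    exact and_congr (sat_addq M q ψ w (fun hh => h (Or.inl hh)))
      (sat_addq M q χ w (fun hh => h (Or.inr hh)))
  | .or ψ χ, w, h => by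
    simp only [Sat, occursV] at *
    exact or_congr (sat_addq M q ψ w (fun hh => h (Or.inl hh)))
      (sat_addq M q χ w (fun hh => h (Or.inr hh)))
  | .box ψ, w, h => by
    simp only [Sat, occursV] at *
    exact forall_congr' fun v => imp_congr Iff.rfl (sat_addq M q ψ v h)
  | .dia ψ, w, h => by
    simp only [Sat, occursV] at *
    exact exists_congr fun v => and_congr Iff.rfl (sat_addq M q ψ v h)
  | .tru, w, h => Iff.rfl
  | .fls, w, h => Iff.rfl

/-- The extension model: worlds are pairs `(u, n)` where `n` is a level counter;
below level `d` we follow `R` (falling back to a self-copy if there is no successor),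
and from level `d` on every world just gets a self-copy successor. -/
def extModel (M : Kripke ℕ) (d : ℕ) : Kripke ℕ where
  World := M.World × ℕ
  nonempty := ⟨(Classical.choice M.nonempty, 0)⟩
  R := fun a b => b.2 = a.2 + 1 ∧
    ((a.2 < d ∧ M.R a.1 b.1) ∨ (¬(a.2 < d ∧ ∃ x, M.R a.1 x) ∧ b.1 = a.1))
  V := fun p a => M.V p a.1

lemma extModel_atLeastOne (M : Kripke ℕ) (d : ℕ) : AtLeastOne (extModel M d).R := by
  intro a
  by_cases h : a.2 < d ∧ ∃ x, M.R a.1 x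
  · obtain ⟨h1, x, hx⟩ := h
    exact ⟨(x, a.2 + 1), rfl, Or.inl ⟨h1, hx⟩⟩
  · exact ⟨(a.1, a.2 + 1), rfl, Or.inr ⟨h, rfl⟩⟩

lemma transfer (M : Kripke ℕ) (d : ℕ) (w : M.World)
    (hsucc : ∀ i, i ≤ d → ∀ u, chainR M.R i w u → ∃ v, M.R u v) (ψ : Fml ℕ) :
    ∀ (n : ℕ) (u : M.World), n + mdep ψ ≤ d → chainR M.R n w u →
      (Sat M ψ u ↔ Sat (extModel M d) ψ (u, n)) := by
  induction ψ with
  | var p => intro n u _ _; exact Iff.rfl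
  | nvar p => intro n u _ _; exact Iff.rfl
  | neg ψ ih => intro n u hn hc; exact not_congr (ih n u hn hc)
  | and ψ χ ihψ ihχ =>
    intro n u hn hc
    simp only [mdep] at hn
    exact and_congr (ihψ n u (by omega) hc) (ihχ n u (by omega) hc)
  | or ψ χ ihψ ihχ =>
    intro n u hn hc
    simp only [mdep] at hn
    exact or_congr (ihψ n u (by omega) hc) (ihχ n u (by omega) hc)
  | box ψ ih =>
    intro n u hn hc
    simp only [mdep] at hn
    have hnd : n < d := by omega
    constructor
    · intro h b hb
      obtain ⟨hb2, hcase⟩ := hb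
      rcases hcase with ⟨-, hR⟩ | ⟨hno, -⟩
      · have hbeq : b = (b.1, n + 1) := Prod.ext rfl hb2
        rw [hbeq]
        exact (ih (n + 1) b.1 (by omega)
          (chainR_snoc M.R n w u b.1 hc hR)).1 (h b.1 hR)
      · exact absurd ⟨hnd, hsucc n hnd.le u hc⟩ hno
    · intro h v hR
      exact (ih (n + 1) v (by omega) (chainR_snoc M.R n w u v hc hR)).2
        (h (v, n + 1) ⟨rfl, Or.inl ⟨hnd, hR⟩⟩)
  | dia ψ ih =>
    intro n u hn hc
    simp only [mdep] at hn
    have hnd : n < d := by omega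
    constructor
    · rintro ⟨v, hR, hv⟩
      exact ⟨(v, n + 1), ⟨rfl, Or.inl ⟨hnd, hR⟩⟩,
        (ih (n + 1) v (by omega) (chainR_snoc M.R n w u v hc hR)).1 hv⟩
    · rintro ⟨b, ⟨hb2, hcase⟩, hv⟩
      rcases hcase with ⟨-, hR⟩ | ⟨hno, -⟩
      · refine ⟨b.1, hR, (ih (n + 1) b.1 (by omega)
          (chainR_snoc M.R n w u b.1 hc hR)).2 ?_⟩
        have hbeq : b = (b.1, n + 1) := Prod.ext rfl hb2
        rw [hbeq] at hv; exact hv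
      · exact absurd ⟨hnd, hsucc n hnd.le u hc⟩ hno
  | tru => intro n u _ _; exact Iff.rfl
  | fls => intro n u _ _; exact Iff.rfl

/-- For a poor man's formula `φ` and a variable `q` not occurring in `φ`,
`φ` is satisfiable with respect to `F≥1` iff `φ ∧ ⋀_{i=0}^{md(φ)} □^i ◇q` is satisfiable
with respect to the class of all frames. -/
theorem stmt4 (φ : Fml ℕ) (hφ : PoorF φ) (q : ℕ) (hq : ¬ occursV q φ) :
    SatGe1 φ ↔
      SatAll (.and φ
        (bigConj ((List.range (mdep φ + 1)).map (fun i => boxI i (.dia (.var q)))))) := by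
  constructor
  · rintro ⟨M, hM, w, hw⟩
    refine ⟨{ World := M.World, nonempty := M.nonempty, R := M.R,
              V := fun p u => p = q ∨ M.V p u }, w,
      (sat_addq M q φ w hq).1 hw, ?_⟩
    rw [sat_bigConj]
    intro ψ hψ
    simp only [List.mem_map, List.mem_range] at hψ
    obtain ⟨i, _, rfl⟩ := hψ
    rw [sat_boxI]
    intro u _
    obtain ⟨v, hv⟩ := hM u
    exact ⟨v, hv, Or.inl rfl⟩
  · rintro ⟨M, w, hw1, hw2⟩
    set d := mdep φ with hd
    have hsucc : ∀ i, i ≤ d → ∀ u, chainR M.R i w u → ∃ v, M.R u v := by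
      intro i hi u hc
      have hmem : boxI i (Fml.dia (Fml.var q)) ∈
          (List.range (d + 1)).map (fun i => boxI i (.dia (.var q))) :=
        List.mem_map.2 ⟨i, List.mem_range.2 (by omega), rfl⟩
      have := (sat_boxI M _ i w).1 ((sat_bigConj M w _).1 hw2 _ hmem) u hc
      obtain ⟨v, hv, -⟩ := this
      exact ⟨v, hv⟩
    exact ⟨extModel M d, extModel_atLeastOne M d, (w, 0),
      (transfer M d w hsucc φ 0 w (by omega) rfl).1 hw1⟩

end PoorMansModal
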